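/- Let B ∈ H^∞_{M_n} be a rational matrix function and Θ = θ I_n with θ a finite Blaschke product. Then the following are equivalent: (a) B(α) is invertible for each zero α of θ; (b) B and Θ are right coprime; (c) B and Θ are left coprime. -/

import Mathlib

open MeasureTheory Complex Real InnerProductSpace Submodule

set_option maxHeartbeats 1000000
set_option synthInstance.maxHeartbeats 200000

noncomputable section

namespace BlockToeplitz

instance fact2pi : Fact (0 < 2 * π) := ⟨by positivity⟩

/-- The unit circle, as the additive circle `ℝ / 2πℤ`. -/
abbrev 𝕋 : Type := AddCircle (2 * π)

/-- Normalized Haar (Lebesgue) measure on the circle. -/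
abbrev μ𝕋 : Measure 𝕋 := AddCircle.haarAddCircle

section Pointwise

variable {E F : Type*} [NormedAddCommGroup E] [NormedSpace ℂ E]
  [NormedAddCommGroup F] [NormedSpace ℂ F]

theorem memLp_pointwise {Φ : 𝕋 → (E →L[ℂ] F)} (hm : AEStronglyMeasurable Φ μ𝕋)
    {C : ℝ} (hC : ∀ x, ‖Φ x‖ ≤ C) (f : Lp E 2 μ𝕋) :
    MemLp (fun x => Φ x (f x)) 2 μ𝕋 := by
  refine MemLp.of_le_mul (c := C) (Lp.memLp f) ?_ ?_
  · exact isBoundedBilinearMap_apply.continuous.comp_aestronglyMeasurable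
      (hm.prodMk (Lp.aestronglyMeasurable f))
  · refine Filter.Eventually.of_forall fun x => ?_
    exact (ContinuousLinearMap.le_opNorm _ _).trans
      (mul_le_mul_of_nonneg_right (hC x) (norm_nonneg _))

/-- The operator on `L²` of pointwise application of a uniformly bounded family of
operators (e.g. multiplication by an `L^∞` matrix function). -/
def pointwiseCLM (Φ : 𝕋 → (E →L[ℂ] F)) (hm : AEStronglyMeasurable Φ μ𝕋)
    {C : ℝ} (hC : ∀ x, ‖Φ x‖ ≤ C) : Lp E 2 μ𝕋 →L[ℂ] Lp F 2 μ𝕋 :=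
  LinearMap.mkContinuous
    { toFun := fun f => (memLp_pointwise hm hC f).toLp _
      map_add' := fun f g => by
        rw [← MemLp.toLp_add (memLp_pointwise hm hC f) (memLp_pointwise hm hC g)]
        refine MemLp.toLp_congr _ _ ?_
        filter_upwards [Lp.coeFn_add f g] with x hx
        simp only [hx, Pi.add_apply, map_add]
      map_smul' := fun c f => by
        try dsimp only
        try simp only [RingHom.id_apply]
        rw [← MemLp.toLp_const_smul c (memLp_pointwise hm hC f)]
        refine MemLp.toLp_congr _ _ ?_
        filter_upwards [Lp.coeFn_smul c f] with x hx
        simp only [hx, Pi.smul_apply, ContinuousLinearMap.map_smul] }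
    (max C 0)
    (by
      intro f
      simp only [LinearMap.coe_mk, AddHom.coe_mk]
      rw [Lp.norm_toLp]
      have hb : eLpNorm (fun x => Φ x (f x)) 2 μ𝕋
          ≤ ENNReal.ofReal (max C 0) * eLpNorm (f : 𝕋 → E) 2 μ𝕋 := by
        refine eLpNorm_le_mul_eLpNorm_of_ae_le_mul ?_ 2
        refine Filter.Eventually.of_forall fun x => ?_
        exact (ContinuousLinearMap.le_opNorm _ _).trans
          (mul_le_mul_of_nonneg_right ((hC x).trans (le_max_left _ _)) (norm_nonneg _))
      calc (eLpNorm (fun x => Φ x (f x)) 2 μ𝕋).toReal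
          ≤ (ENNReal.ofReal (max C 0) * eLpNorm (f : 𝕋 → E) 2 μ𝕋).toReal := by
            refine ENNReal.toReal_mono ?_ hb
            exact ENNReal.mul_ne_top ENNReal.ofReal_ne_top (Lp.eLpNorm_ne_top f)
        _ = max C 0 * ‖f‖ := by
            rw [ENNReal.toReal_mul, ENNReal.toReal_ofReal (le_max_right C 0), Lp.norm_def])

@[simp] theorem pointwiseCLM_apply (Φ : 𝕋 → (E →L[ℂ] F)) (hm : AEStronglyMeasurable Φ μ𝕋)
    {C : ℝ} (hC : ∀ x, ‖Φ x‖ ≤ C) (f : Lp E 2 μ𝕋) :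
    pointwiseCLM Φ hm hC f = (memLp_pointwise hm hC f).toLp _ := rfl

end Pointwise

end BlockToeplitz

namespace BlockToeplitz
open scoped ComplexConjugate

variable {ι : Type} [Fintype ι]

/-- `ℂ^ι`. -/
abbrev V (ι : Type) [Fintype ι] : Type := EuclideanSpace ℂ ι

/-- The space `L²(𝕋, ℂ^ι)`. -/
abbrev L2 (ι : Type) [Fintype ι] : Type := Lp (V ι) 2 μ𝕋

/-- The vector-valued trigonometric monomial `z^k ⊗ e_i` as an element of `L²`. -/
def fourierV (ι : Type) [Fintype ι] [DecidableEq ι] (k : ℤ) (i : ι) : L2 ι :=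
  (ContinuousMap.toLp (E := V ι) 2 μ𝕋 ℂ)
    ⟨fun x => fourier k x • EuclideanSpace.single i 1,
      (map_continuous (fourier k)).smul continuous_const⟩

/-- The span of the analytic-negative monomials. -/
def negSpan (ι : Type) [Fintype ι] : Submodule ℂ (L2 ι) :=
  Submodule.span ℂ
    {f | ∃ k : ℤ, k < 0 ∧ ∃ i : ι, f = @fourierV ι _ (Classical.decEq ι) k i}

/-- The vector-valued Hardy space `H²(𝕋, ℂ^ι)`, i.e. the orthogonal complement in
`L²` of the span of the monomials `z^k ⊗ e_i`, `k < 0`. -/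
def hardy (ι : Type) [Fintype ι] : Submodule ℂ (L2 ι) := (negSpan ι)ᗮ

/-- The Hardy space as a Hilbert space. -/
abbrev H2 (ι : Type) [Fintype ι] : Type := ↥(hardy ι)

instance : CompleteSpace (H2 ι) := by
  unfold H2 hardy; infer_instance

instance : HasOrthogonalProjection (hardy ι) := by
  unfold hardy; infer_instance

/-- The orthogonal projection `P` of `L²` onto `H²`. -/
def hardyProj (ι : Type) [Fintype ι] : L2 ι →L[ℂ] H2 ι :=
  orthogonalProjection (hardy ι)

/-- A matrix-valued `L^∞` function on the circle (the matrices being identified with the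
operators on `ℂ^ι` that they induce): a bounded measurable family of operators. -/
structure Symbol (ι : Type) [Fintype ι] : Type where
  toFun : 𝕋 → (V ι →L[ℂ] V ι)
  meas : AEStronglyMeasurable toFun μ𝕋
  bound : ℝ
  le_bound : ∀ x, ‖toFun x‖ ≤ bound

instance : CoeFun (Symbol ι) (fun _ => 𝕋 → (V ι →L[ℂ] V ι)) := ⟨Symbol.toFun⟩

/-- The multiplication operator `f ↦ Φ f` on `L²(𝕋, ℂ^ι)`. -/
def Symbol.mulLp (Φ : Symbol ι) : L2 ι →L[ℂ] L2 ι :=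
  pointwiseCLM Φ.toFun Φ.meas Φ.le_bound

/-- Pointwise product (composition) of two matrix symbols. -/
def Symbol.mul (Φ Ψ : Symbol ι) : Symbol ι where
  toFun := fun x => (Φ x).comp (Ψ x)
  meas := isBoundedBilinearMap_comp.continuous.comp_aestronglyMeasurable
    (Φ.meas.prodMk Ψ.meas)
  bound := max Φ.bound 0 * max Ψ.bound 0
  le_bound := fun x => (ContinuousLinearMap.opNorm_comp_le _ _).trans <|
    mul_le_mul ((Φ.le_bound x).trans (le_max_left _ _))
      ((Ψ.le_bound x).trans (le_max_left _ _)) (norm_nonneg _) (le_max_right _ _)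

/-- The pointwise adjoint symbol `Φ*` (conjugate transpose). -/
def Symbol.star (Φ : Symbol ι) : Symbol ι where
  toFun := fun x => ContinuousLinearMap.adjoint (Φ x)
  meas := (ContinuousLinearMap.adjoint (𝕜 := ℂ) (E := V ι)
      (F := V ι)).continuous.comp_aestronglyMeasurable Φ.meas
  bound := Φ.bound
  le_bound := fun x =>
    le_trans
      (le_of_eq ((ContinuousLinearMap.adjoint (𝕜 := ℂ) (E := V ι) (F := V ι)).norm_map (Φ.toFun x)))
      (Φ.le_bound x)

end BlockToeplitz

namespace BlockToeplitz
open scoped ComplexConjugate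

theorem norm_fourier_apply (k : ℤ) (x : 𝕋) : ‖fourier k x‖ = 1 := by
  rw [fourier_apply]; exact Circle.norm_coe _

section CompNeg

variable {E : Type*} [NormedAddCommGroup E] [NormedSpace ℂ E]

/-- The composition operator `f(z) ↦ f(z̄)` (i.e. `x ↦ -x` on the additive circle)
on `L²`. -/
def compNeg (E : Type*) [NormedAddCommGroup E] [NormedSpace ℂ E] :
    Lp E 2 μ𝕋 →L[ℂ] Lp E 2 μ𝕋 :=
  LinearMap.mkContinuous
    { toFun := fun f =>
        Lp.compMeasurePreserving (E := E) (p := 2) Neg.neg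
          (Measure.measurePreserving_neg μ𝕋) f
      map_add' := fun f g => by
        exact map_add (Lp.compMeasurePreserving Neg.neg (Measure.measurePreserving_neg μ𝕋)) f g
      map_smul' := fun c f => by
        apply Lp.ext
        have h1 := Lp.coeFn_compMeasurePreserving (μ := μ𝕋) (c • f)
          (Measure.measurePreserving_neg μ𝕋)
        have h2 := Lp.coeFn_compMeasurePreserving (μ := μ𝕋) f
          (Measure.measurePreserving_neg μ𝕋)
        have h3 : ((c • f : Lp E 2 μ𝕋) : 𝕋 → E) ∘ Neg.neg
            =ᵐ[μ𝕋] ((c • (f : 𝕋 → E)) ∘ Neg.neg) :=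
          (Measure.measurePreserving_neg μ𝕋).quasiMeasurePreserving.ae_eq_comp
            (Lp.coeFn_smul c f)
        filter_upwards [h1, h3,
          Lp.coeFn_smul c (Lp.compMeasurePreserving (E := E) (p := 2) Neg.neg
            (Measure.measurePreserving_neg μ𝕋) f), h2]
          with x hx1 hx3 hx4 hx2
        rw [RingHom.id_apply, hx1, hx3, hx4]
        show c • (f : 𝕋 → E) (-x)
            = c • (Lp.compMeasurePreserving (E := E) (p := 2) Neg.neg
                (Measure.measurePreserving_neg μ𝕋) f : 𝕋 → E) x
        rw [hx2]
        rfl }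
    1
    (fun f => by
      simpa using (Lp.norm_compMeasurePreserving (E := E) (p := 2) f
        (Measure.measurePreserving_neg μ𝕋)).le)

/-- The unitary operator `J f (z) = z̄ f(z̄)` on `L²`. -/
def Jop (E : Type*) [NormedAddCommGroup E] [NormedSpace ℂ E] :
    Lp E 2 μ𝕋 →L[ℂ] Lp E 2 μ𝕋 :=
  (pointwiseCLM (fun x => (fourier (-1) x : ℂ) • (1 : E →L[ℂ] E))
      (((map_continuous (fourier (-1))).smul continuous_const).aestronglyMeasurable)
      (C := 1)
      (fun x => by
        show ‖(fourier (-1)) x • (1 : E →L[ℂ] E)‖ ≤ 1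
        rw [norm_smul ((fourier (-1)) x) (1 : E →L[ℂ] E), norm_fourier_apply, one_mul,
          ContinuousLinearMap.one_def]
        exact ContinuousLinearMap.norm_id_le)).comp (compNeg E)

end CompNeg

end BlockToeplitz

namespace BlockToeplitz
open scoped ComplexConjugate

variable {ι : Type} [Fintype ι]

/-- The pointwise transposed-conjugated-reflected symbol `Φ̃(z) := Φ(z̄)*`. -/
def Symbol.tilde (Φ : Symbol ι) : Symbol ι where
  toFun := fun x => ContinuousLinearMap.adjoint (Φ.toFun (-x))
  meas := (ContinuousLinearMap.adjoint (𝕜 := ℂ) (E := V ι)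
      (F := V ι)).continuous.comp_aestronglyMeasurable
    (Φ.meas.comp_quasiMeasurePreserving
      (Measure.measurePreserving_neg μ𝕋).quasiMeasurePreserving)
  bound := Φ.bound
  le_bound := fun x =>
    le_trans
      (le_of_eq
        ((ContinuousLinearMap.adjoint (𝕜 := ℂ) (E := V ι) (F := V ι)).norm_map (Φ.toFun (-x))))
      (Φ.le_bound (-x))

/-- A matrix symbol belongs to `H^∞` iff multiplication by it leaves the Hardy space
invariant. -/
def Symbol.MemHinf (Φ : Symbol ι) : Prop :=
  ∀ f : L2 ι, f ∈ hardy ι → Φ.mulLp f ∈ hardy ι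

/-- A matrix `H^∞` symbol is inner if `Θ(z)*Θ(z) = I` a.e. -/
def Symbol.IsInner (Φ : Symbol ι) : Prop :=
  Φ.MemHinf ∧ ∀ᵐ x ∂μ𝕋, (ContinuousLinearMap.adjoint (Φ.toFun x)).comp (Φ.toFun x) = 1

/-- The block Toeplitz operator `T_Φ = P (Φ ·)` on the vector Hardy space. -/
def toeplitz (Φ : Symbol ι) : H2 ι →L[ℂ] H2 ι :=
  (hardyProj ι).comp (Φ.mulLp.comp (hardy ι).subtypeL)

/-- The block Hankel operator `H_Φ = J P^⊥ (Φ ·)`, viewed as an operator from `H²` to `H²`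
(its image indeed lies in `H²`). -/
def hankel (Φ : Symbol ι) : H2 ι →L[ℂ] H2 ι :=
  (hardyProj ι).comp <|
    (Jop (V ι)).comp <|
      (ContinuousLinearMap.id ℂ (L2 ι) - (hardy ι).subtypeL.comp (hardyProj ι)).comp <|
        Φ.mulLp.comp (hardy ι).subtypeL

/-- The image `Θ · H²` of the Hardy space under multiplication by a symbol. -/
def Symbol.rangeH2 (Φ : Symbol ι) : Submodule ℂ (L2 ι) :=
  (hardy ι).map (Φ.mulLp : L2 ι →ₗ[ℂ] L2 ι)

/-- The model space `H(Θ) := H² ⊖ Θ H²`. -/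
def modelSpace (Θ : Symbol ι) : Submodule ℂ (L2 ι) :=
  hardy ι ⊓ (Θ.rangeH2)ᗮ

/-- A scalar-valued `L^∞` function on the circle. -/
structure SymbolS : Type where
  toFun : 𝕋 → ℂ
  meas : AEStronglyMeasurable toFun μ𝕋
  bound : ℝ
  le_bound : ∀ x, ‖toFun x‖ ≤ bound

instance : CoeFun SymbolS (fun _ => 𝕋 → ℂ) := ⟨SymbolS.toFun⟩

/-- Scalar symbols embed into matrix symbols as `φ I_n`. -/
def SymbolS.toMatrix (φ : SymbolS) (ι : Type) [Fintype ι] : Symbol ι where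
  toFun := fun x => φ.toFun x • (1 : V ι →L[ℂ] V ι)
  meas := φ.meas.smul aestronglyMeasurable_const
  bound := φ.bound
  le_bound := fun x => by
    have h0 : (0 : ℝ) ≤ φ.bound := le_trans (norm_nonneg _) (φ.le_bound 0)
    calc ‖φ.toFun x • (1 : V ι →L[ℂ] V ι)‖ ≤ ‖φ.toFun x‖ * ‖(1 : V ι →L[ℂ] V ι)‖ :=
          ContinuousLinearMap.opNorm_smul_le _ _
      _ ≤ φ.bound * 1 := by
          refine mul_le_mul (φ.le_bound x) ?_ (norm_nonneg _) h0
          rw [ContinuousLinearMap.one_def]; exact ContinuousLinearMap.norm_id_le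
      _ = φ.bound := mul_one _

/-- The scalar-valued `L²` space of the circle. -/
abbrev L2S : Type := Lp ℂ 2 μ𝕋

/-- The span of the negative trigonometric monomials. -/
def negSpanS : Submodule ℂ L2S :=
  Submodule.span ℂ {f | ∃ k : ℤ, k < 0 ∧ f = fourierLp 2 k}

/-- The scalar Hardy space `H²(𝕋)`. -/
def hardyS : Submodule ℂ L2S := negSpanSᗮ

/-- The scalar Hardy space as a Hilbert space. -/
abbrev H2S : Type := ↥hardyS

instance : CompleteSpace H2S := by unfold H2S hardyS; infer_instance

instance : HasOrthogonalProjection hardyS := by unfold hardyS; infer_instance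

/-- The Szegő (Riesz) projection `P : L² → H²`. -/
def hardyProjS : L2S →L[ℂ] H2S := orthogonalProjection hardyS

/-- Multiplication by a scalar `L^∞` function, as an operator on `L²(𝕋)`. -/
def SymbolS.mulLp (φ : SymbolS) : L2S →L[ℂ] L2S :=
  pointwiseCLM (fun x => φ.toFun x • (1 : ℂ →L[ℂ] ℂ))
    (φ.meas.smul aestronglyMeasurable_const)
    (C := φ.bound)
    (fun x => by
      calc ‖φ.toFun x • (1 : ℂ →L[ℂ] ℂ)‖ ≤ ‖φ.toFun x‖ * ‖(1 : ℂ →L[ℂ] ℂ)‖ :=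
            ContinuousLinearMap.opNorm_smul_le _ _
        _ = ‖φ.toFun x‖ := by rw [norm_one, mul_one]
        _ ≤ φ.bound := φ.le_bound x)

/-- The scalar Toeplitz operator `T_φ` on `H²`. -/
def toeplitzS (φ : SymbolS) : H2S →L[ℂ] H2S :=
  hardyProjS.comp (φ.mulLp.comp hardyS.subtypeL)

/-- The scalar Hankel operator `H_φ = J P^⊥ (φ ·)` on `H²`. -/
def hankelS (φ : SymbolS) : H2S →L[ℂ] H2S :=
  hardyProjS.comp <|
    (Jop ℂ).comp <|
      (ContinuousLinearMap.id ℂ L2S - hardyS.subtypeL.comp hardyProjS).comp <|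
        φ.mulLp.comp hardyS.subtypeL

/-- Pointwise product of scalar symbols. -/
def SymbolS.mul (φ ψ : SymbolS) : SymbolS where
  toFun := fun x => φ.toFun x * ψ.toFun x
  meas := φ.meas.mul ψ.meas
  bound := max φ.bound 0 * max ψ.bound 0
  le_bound := fun x => by
    rw [norm_mul]
    exact mul_le_mul ((φ.le_bound x).trans (le_max_left _ _))
      ((ψ.le_bound x).trans (le_max_left _ _)) (norm_nonneg _) (le_max_right _ _)

/-- The complex-conjugate symbol `φ̄`. -/
def SymbolS.conj (φ : SymbolS) : SymbolS where
  toFun := fun x => conj (φ.toFun x)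
  meas := Complex.continuous_conj.comp_aestronglyMeasurable φ.meas
  bound := φ.bound
  le_bound := fun x => le_trans (le_of_eq (RCLike.norm_conj _)) (φ.le_bound x)

/-- The reflected conjugate symbol `φ̃(z) := conj (φ(z̄))`. -/
def SymbolS.tilde (φ : SymbolS) : SymbolS where
  toFun := fun x => conj (φ.toFun (-x))
  meas := Complex.continuous_conj.comp_aestronglyMeasurable
    (φ.meas.comp_quasiMeasurePreserving
      (Measure.measurePreserving_neg μ𝕋).quasiMeasurePreserving)
  bound := φ.bound
  le_bound := fun x => le_trans (le_of_eq (RCLike.norm_conj _)) (φ.le_bound (-x))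

/-- A scalar symbol is in `H^∞` iff multiplication by it preserves `H²`. -/
def SymbolS.MemHinf (φ : SymbolS) : Prop :=
  ∀ f : L2S, f ∈ hardyS → φ.mulLp f ∈ hardyS

/-- A scalar inner function: an `H^∞` function which is unimodular a.e. on the circle. -/
def SymbolS.IsInner (φ : SymbolS) : Prop :=
  φ.MemHinf ∧ ∀ᵐ x ∂μ𝕋, ‖φ.toFun x‖ = 1

/-- The image `θ · H²` of the Hardy space under a scalar multiplication operator. -/
def SymbolS.rangeH2 (φ : SymbolS) : Submodule ℂ L2S :=
  hardyS.map (φ.mulLp : L2S →ₗ[ℂ] L2S)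

/-- The scalar model space `H(θ) = H² ⊖ θH²`. -/
def modelSpaceS (θ : SymbolS) : Submodule ℂ L2S :=
  hardyS ⊓ (θ.rangeH2)ᗮ

/-- The coordinate function `z` on the circle (i.e. `x ↦ e^{ix}`). -/
def circleCoord : 𝕋 → ℂ := fun x => fourier 1 x

/-- The symbol `z` of the unilateral shift. -/
def shiftSymbolS : SymbolS where
  toFun := circleCoord
  meas := (map_continuous (fourier 1)).aestronglyMeasurable
  bound := 1
  le_bound := fun x => le_of_eq (norm_fourier_apply 1 x)

/-- The symbol `z̄`. -/
def coshiftSymbolS : SymbolS where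
  toFun := fun x => fourier (-1) x
  meas := (map_continuous (fourier (-1))).aestronglyMeasurable
  bound := 1
  le_bound := fun x => le_of_eq (norm_fourier_apply (-1) x)

/-- An operator on a complex Hilbert space is hyponormal if its self-commutator
`[T*, T] = T*T - TT*` is a positive operator. -/
def Hyponormal {H : Type*} [NormedAddCommGroup H] [InnerProductSpace ℂ H] [CompleteSpace H]
    (T : H →L[ℂ] H) : Prop :=
  (ContinuousLinearMap.adjoint T ∘L T - T ∘L ContinuousLinearMap.adjoint T).IsPositive

/-- A Blaschke factor `b_a(z) = (z - a)/(1 - āz)`. -/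
def blaschke (a z : ℂ) : ℂ := (z - a) / (1 - conj a * z)

end BlockToeplitz

namespace BlockToeplitz
open scoped ComplexConjugate

namespace Disk

/-- `n × n` complex matrices. -/
abbrev Mat (n : ℕ) : Type := Matrix (Fin n) (Fin n) ℂ

/-- The open unit disk. -/
def 𝔻 : Set ℂ := Metric.ball 0 1

/-- A matrix function analytic on the open unit disk. -/
def AnalyticOnD {n : ℕ} (B : ℂ → Mat n) : Prop :=
  ∀ i j, DifferentiableOn ℂ (fun z => B z i j) 𝔻

/-- A matrix function bounded on the open unit disk (membership in `H^∞_{M_n}`). -/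
def BoundedOnD {n : ℕ} (B : ℂ → Mat n) : Prop :=
  ∃ C : ℝ, ∀ z ∈ 𝔻, ∀ i j, ‖B z i j‖ ≤ C

/-- A rational matrix function: some nonzero scalar polynomial multiple of it agrees with a
polynomial matrix on the disk. -/
def IsRationalMat {n : ℕ} (B : ℂ → Mat n) : Prop :=
  ∃ p : Polynomial ℂ, p ≠ 0 ∧ ∃ N : Matrix (Fin n) (Fin n) (Polynomial ℂ),
    ∀ z ∈ 𝔻, ∀ i j, p.eval z * B z i j = (N i j).eval z

/-- A finite Blaschke–Potapov product: a constant unitary times a finite product of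
Blaschke–Potapov factors `b_λ P + (I - P)` (`P` an orthogonal projection, `|λ| < 1`). -/
def IsBPProd {n : ℕ} (D : ℂ → Mat n) : Prop :=
  ∃ ν ∈ Matrix.unitaryGroup (Fin n) ℂ, ∃ L : List (ℂ × Mat n),
    (∀ q ∈ L, ‖q.1‖ < 1 ∧ q.2.IsHermitian ∧ q.2 * q.2 = q.2) ∧
    ∀ z : ℂ, D z = ν * (L.map (fun q => blaschke q.1 z • q.2 + (1 - q.2))).prod

/-- `D` is a left inner divisor of `B` (on the disk): `B = D A` with `A` analytic. -/
def IsLeftDivOn {n : ℕ} (D B : ℂ → Mat n) : Prop :=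
  ∃ A : ℂ → Mat n, AnalyticOnD A ∧ ∀ z ∈ 𝔻, B z = D z * A z

/-- Left coprimeness: every common (finite Blaschke–Potapov) left inner divisor of `B` and
`Θ` is a unitary constant. -/
def LeftCoprimeOn {n : ℕ} (B Θ : ℂ → Mat n) : Prop :=
  ∀ D : ℂ → Mat n, IsBPProd D → IsLeftDivOn D B → IsLeftDivOn D Θ →
    ∃ U ∈ Matrix.unitaryGroup (Fin n) ℂ, ∀ z ∈ 𝔻, D z = U

/-- The reflected conjugate-transposed matrix function `B̃(z) := B(z̄)*`. -/
def tildeM {n : ℕ} (B : ℂ → Mat n) : ℂ → Mat n := fun z => (B (conj z)).conjTranspose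

/-- Right coprimeness, defined through the reflected functions. -/
def RightCoprimeOn {n : ℕ} (B Θ : ℂ → Mat n) : Prop :=
  LeftCoprimeOn (tildeM B) (tildeM Θ)

end Disk

/-!
If `B(α)` is invertible at every zero `α` of `θ`, every common Blaschke–Potapov left divisor `D`
of `B` and `θ I` is invertible on the disk: at a zero of `θ` because `B = D A`, elsewhere because
`θ I = D A'`. A Blaschke–Potapov product that is invertible at the zeros of its own factors has
only trivial factors, hence is a constant unitary.

Conversely, if `B(α)` is singular at a zero `α` of `θ`, let `P` be the orthogonal projection onto
the line spanned by `w*`, where `w B(α) = 0`. Both `P B` and `P θ` vanish at `α`, so the factor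
`b_α P + (I - P)` divides `B` and `θ I` on the left, yet at `α` it is the singular `I - P`.

Right coprimeness is left coprimeness of `B̃` and `θ̃ I`, and `B̃(ᾱ) = B(α)*`.
-/

end BlockToeplitz

lemma List.isUnit_of_mem_of_isUnit_prod {M : Type*} [Monoid M] [IsDedekindFiniteMonoid M]
    {l : List M} (hl : IsUnit l.prod) {a : M} (ha : a ∈ l) : IsUnit a := by
  induction l with
  | nil => simp at ha
  | cons b l ih =>
    rw [List.prod_cons] at hl
    rcases List.mem_cons.1 ha with rfl | ha
    · exact isUnit_of_mul_isUnit_left hl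
    · exact ih (isUnit_of_mul_isUnit_right hl) ha

lemma IsIdempotentElem.eq_zero_of_isUnit_one_sub {R : Type*} [Ring R] {p : R}
    (hp : IsIdempotentElem p) (h : IsUnit (1 - p)) : p = 0 :=
  sub_eq_self.1 ((IsIdempotentElem.iff_eq_one_of_isUnit h).1 hp.one_sub)

namespace Matrix

open scoped ComplexOrder in
lemma exists_isHermitian_isIdempotentElem_mul_eq_zero {𝕜 m : Type*} [RCLike 𝕜] [Fintype m]
    [DecidableEq m] {M : Matrix m m 𝕜} (hM : ¬ IsUnit M) :
    ∃ P : Matrix m m 𝕜, P.IsHermitian ∧ IsIdempotentElem P ∧ P ≠ 0 ∧ P * M = 0 := by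
  rw [isUnit_iff_isUnit_det, isUnit_iff_ne_zero, not_not] at hM
  obtain ⟨w, hw, hwM⟩ := exists_vecMul_eq_zero_iff.2 hM
  set s := star w ⬝ᵥ w with hs_def
  have hs : s ≠ 0 := dotProduct_star_self_eq_zero.not.2 hw
  have hs' : w ⬝ᵥ star w = s := dotProduct_comm _ _
  refine ⟨s⁻¹ • vecMulVec (star w) w, ?_, ?_, fun h => hw ?_, ?_⟩
  · have : star s = s := by rw [hs_def, ← star_dotProduct_star, star_star]
    simp [IsHermitian, conjTranspose_smul, this]
  · simp [IsIdempotentElem, vecMulVec_mul_vecMulVec, hs', hs]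
  · have := congrArg (· *ᵥ star w) h
    simpa [smul_mulVec, vecMulVec_mulVec, hs', hs] using this
  · rw [smul_mul_assoc, vecMulVec_mul, hwM]; simp

end Matrix

namespace BlockToeplitz
open scoped ComplexConjugate

namespace Disk

variable {n : ℕ}

lemma mem_𝔻 {z : ℂ} : z ∈ 𝔻 ↔ ‖z‖ < 1 := mem_ball_zero_iff

lemma isOpen_𝔻 : IsOpen 𝔻 := Metric.isOpen_ball

lemma conj_mem_𝔻 {z : ℂ} (hz : z ∈ 𝔻) : conj z ∈ 𝔻 := by
  rwa [mem_𝔻, RCLike.norm_conj, ← mem_𝔻]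

lemma one_sub_conj_mul_ne_zero {a z : ℂ} (ha : ‖a‖ < 1) (hz : z ∈ 𝔻) :
    1 - conj a * z ≠ 0 := by
  refine sub_ne_zero.2 fun h => ?_
  have : ‖conj a * z‖ < 1 := by
    rw [norm_mul, RCLike.norm_conj]
    nlinarith [norm_nonneg a, norm_nonneg z, mem_𝔻.1 hz]
  simp [← h] at this

lemma blaschke_mul_one_sub_conj_mul {a z : ℂ} (ha : ‖a‖ < 1) (hz : z ∈ 𝔻) :
    blaschke a z * (1 - conj a * z) = z - a :=
  div_mul_cancel₀ _ (one_sub_conj_mul_ne_zero ha hz)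

lemma blaschke_self (a : ℂ) : blaschke a a = 0 := by simp [blaschke]

lemma differentiableOn_blaschke {a : ℂ} (ha : ‖a‖ < 1) :
    DifferentiableOn ℂ (blaschke a) 𝔻 :=
  (differentiableOn_id.sub_const a).div (by fun_prop)
    fun _ hz => one_sub_conj_mul_ne_zero ha hz

lemma differentiableOn_prod_blaschke {L : List ℂ} (hL : ∀ a ∈ L, ‖a‖ < 1) :
    DifferentiableOn ℂ (fun z => (L.map (fun a => blaschke a z)).prod) 𝔻 := by
  induction L with
  | nil => exact differentiableOn_const 1
  | cons a L ih =>
    simp only [List.map_cons, List.prod_cons]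
    exact (differentiableOn_blaschke (hL a List.mem_cons_self)).mul
      (ih fun b hb => hL b (List.mem_cons_of_mem a hb))

lemma differentiableOn_conj_conj {f : ℂ → ℂ} (hf : DifferentiableOn ℂ f 𝔻) :
    DifferentiableOn ℂ (fun z => conj (f (conj z))) 𝔻 := fun z hz => by
  have := (hf.differentiableAt (isOpen_𝔻.mem_nhds (conj_mem_𝔻 hz))).conj_conj
  rw [Complex.conj_conj] at this
  exact this.differentiableWithinAt

namespace AnalyticOnD

lemma add {F G : ℂ → Mat n} (hF : AnalyticOnD F) (hG : AnalyticOnD G) :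
    AnalyticOnD (fun z => F z + G z) := fun i j => (hF i j).add (hG i j)

lemma const_mul {F : ℂ → Mat n} (hF : AnalyticOnD F) (M : Mat n) :
    AnalyticOnD (fun z => M * F z) := fun i j => by
  simp only [Matrix.mul_apply]
  exact DifferentiableOn.fun_sum fun k _ => (hF k j).const_mul (M i k)

lemma smul {f : ℂ → ℂ} {F : ℂ → Mat n} (hf : DifferentiableOn ℂ f 𝔻) (hF : AnalyticOnD F) :
    AnalyticOnD (fun z => f z • F z) := fun i j => by
  simpa only [Matrix.smul_apply, smul_eq_mul] using hf.fun_mul (hF i j)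

lemma smul_one {f : ℂ → ℂ} (hf : DifferentiableOn ℂ f 𝔻) :
    AnalyticOnD (fun z => f z • (1 : Mat n)) :=
  smul hf fun _ _ => differentiableOn_const _

lemma tildeM {B : ℂ → Mat n} (hB : AnalyticOnD B) : AnalyticOnD (tildeM B) := fun i j =>
  differentiableOn_conj_conj (hB j i)

lemma exists_eq_sub_smul {F : ℂ → Mat n} (hF : AnalyticOnD F) {α : ℂ} (hα : α ∈ 𝔻)
    (hFα : F α = 0) : ∃ G : ℂ → Mat n, AnalyticOnD G ∧ ∀ z, F z = (z - α) • G z :=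
  ⟨fun z => Matrix.of fun i j => dslope (fun w => F w i j) α z,
    fun i j => (differentiableOn_dslope (isOpen_𝔻.mem_nhds hα)).2 (hF i j),
    fun z => by
      ext i j
      exact (sub_smul_dslope_of_zero (f := fun w => F w i j) (by simp [hFα]) z).symm⟩

end AnalyticOnD

lemma tildeM_smul_one (θ : ℂ → ℂ) :
    tildeM (fun z => θ z • (1 : Mat n)) = fun z => conj (θ (conj z)) • (1 : Mat n) := by
  funext z
  simp [tildeM, Matrix.conjTranspose_smul]

def bpFactor (a : ℂ) (P : Mat n) (z : ℂ) : Mat n := blaschke a z • P + (1 - P)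

lemma bpFactor_self (a : ℂ) (P : Mat n) : bpFactor a P a = 1 - P := by
  simp [bpFactor, blaschke_self]

lemma isBPProd_bpFactor {a : ℂ} (ha : ‖a‖ < 1) {P : Mat n} (hPh : P.IsHermitian)
    (hP : IsIdempotentElem P) : IsBPProd (bpFactor a P) :=
  ⟨1, one_mem _, [(a, P)], by simpa using ⟨ha, hPh, hP⟩, fun z => by simp [bpFactor]⟩

lemma IsBPProd.exists_eq_unitary_of_isUnit {D : ℂ → Mat n} (hD : IsBPProd D)
    (hunit : ∀ z ∈ 𝔻, IsUnit (D z)) :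
    ∃ U ∈ Matrix.unitaryGroup (Fin n) ℂ, ∀ z ∈ 𝔻, D z = U := by
  obtain ⟨ν, hν, L, hL, hDL⟩ := hD
  -- At its own zero `a` a factor equals `I - P`, which is invertible only if `P = 0`.
  have hP : ∀ q ∈ L, q.2 = 0 := fun q hq => by
    have hprod := hunit q.1 (mem_𝔻.2 (hL q hq).1)
    rw [hDL] at hprod
    have hq' := List.isUnit_of_mem_of_isUnit_prod (isUnit_of_mul_isUnit_right hprod)
      (List.mem_map_of_mem (f := fun q' : ℂ × Mat n => bpFactor q'.1 q'.2 q.1) hq)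
    rw [bpFactor_self] at hq'
    exact IsIdempotentElem.eq_zero_of_isUnit_one_sub (hL q hq).2.2 hq'
  refine ⟨ν, hν, fun z _ => ?_⟩
  rw [hDL, List.prod_eq_one, mul_one]
  simp only [List.mem_map]
  rintro _ ⟨q, hq, rfl⟩
  simp [hP q hq]

lemma isLeftDivOn_bpFactor {α : ℂ} (hα : α ∈ 𝔻) {P : Mat n} (hP : IsIdempotentElem P)
    {F : ℂ → Mat n} (hF : AnalyticOnD F) (hPF : P * F α = 0) :
    IsLeftDivOn (bpFactor α P) F := by
  obtain ⟨G, hG, hPFG⟩ := (hF.const_mul P).exists_eq_sub_smul hα hPF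
  refine ⟨fun z => (1 - conj α * z) • (P * G z) + (1 - P) * F z,
    (AnalyticOnD.smul (by fun_prop) (hG.const_mul P)).add (hF.const_mul (1 - P)),
    fun z hz => ?_⟩
  -- `b_α (1 - ᾱ z) = z - α` absorbs the zero of `P F` at `α`.
  have hPG : (z - α) • (P * G z) = P * F z := by
    rw [← mul_smul_comm, ← hPFG z, ← mul_assoc, hP.eq]
  symm
  calc bpFactor α P z * ((1 - conj α * z) • (P * G z) + (1 - P) * F z)
      = ((1 - conj α * z) * blaschke α z) • (P * G z) + (1 - P) * F z := by
        simp only [bpFactor, add_mul, mul_add, smul_mul_assoc, mul_smul_comm, smul_smul,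
          ← mul_assoc, hP.eq, hP.mul_one_sub_self, hP.one_sub_mul_self, hP.one_sub.eq,
          smul_zero, add_zero, zero_add]
    _ = F z := by
        rw [mul_comm, blaschke_mul_one_sub_conj_mul (mem_𝔻.1 hα) hz, hPG, ← add_mul,
          add_sub_cancel, one_mul]

theorem leftCoprimeOn_smul_one_iff {B : ℂ → Mat n} (hB : AnalyticOnD B) {θ : ℂ → ℂ}
    (hθ : DifferentiableOn ℂ θ 𝔻) :
    (∀ α ∈ 𝔻, θ α = 0 → IsUnit (B α)) ↔ LeftCoprimeOn B (fun z => θ z • (1 : Mat n)) := by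
  constructor
  · rintro hBunit D hD ⟨A, -, hA⟩ ⟨A', -, hA'⟩
    refine hD.exists_eq_unitary_of_isUnit fun z hz => ?_
    by_cases hθz : θ z = 0
    · have hBz := hBunit z hz hθz
      rw [hA z hz] at hBz
      exact isUnit_of_mul_isUnit_left hBz
    · have hθz1 : IsUnit (θ z • (1 : Mat n)) := by
        rw [← Algebra.algebraMap_eq_smul_one]
        exact (isUnit_iff_ne_zero.2 hθz).map _
      rw [show θ z • (1 : Mat n) = D z * A' z from hA' z hz] at hθz1
      exact isUnit_of_mul_isUnit_left hθz1
  · intro hcop α hα hθα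
    by_contra hBα
    obtain ⟨P, hPh, hP, hP0, hPB⟩ := Matrix.exists_isHermitian_isIdempotentElem_mul_eq_zero hBα
    obtain ⟨U, hU, hDU⟩ := hcop _ (isBPProd_bpFactor (mem_𝔻.1 hα) hPh hP)
      (isLeftDivOn_bpFactor hα hP hB hPB)
      (isLeftDivOn_bpFactor hα hP (AnalyticOnD.smul_one hθ) (by simp [hθα]))
    have : IsUnit (1 - P) := by
      rw [← bpFactor_self α P, hDU α hα]
      exact Unitary.isUnit_coe (U := ⟨U, hU⟩)
    exact hP0 (hP.eq_zero_of_isUnit_one_sub this)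

theorem rightCoprimeOn_smul_one_iff {B : ℂ → Mat n} (hB : AnalyticOnD B) {θ : ℂ → ℂ}
    (hθ : DifferentiableOn ℂ θ 𝔻) :
    (∀ α ∈ 𝔻, θ α = 0 → IsUnit (B α)) ↔ RightCoprimeOn B (fun z => θ z • (1 : Mat n)) := by
  rw [RightCoprimeOn, tildeM_smul_one,
    ← leftCoprimeOn_smul_one_iff hB.tildeM (differentiableOn_conj_conj hθ)]
  simp only [tildeM, map_eq_zero, Matrix.isUnit_conjTranspose]
  refine ⟨fun h α hα hθα => h _ (conj_mem_𝔻 hα) hθα, fun h α hα hθα => ?_⟩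
  simpa using h (conj α) (conj_mem_𝔻 hα) (by simpa using hθα)

end Disk

open Disk in
theorem statement5_general (n : ℕ) (B : ℂ → Disk.Mat n) (hB : AnalyticOnD B)
    (θ : ℂ → ℂ) (c : ℂ)
    (L : List ℂ) (hL : ∀ a ∈ L, ‖a‖ < 1)
    (hθ : ∀ z : ℂ, θ z = c * (L.map (fun a => blaschke a z)).prod) :
    ((∀ α ∈ 𝔻, θ α = 0 → IsUnit (B α)) ↔
        RightCoprimeOn B (fun z => θ z • (1 : Mat n))) ∧
    ((∀ α ∈ 𝔻, θ α = 0 → IsUnit (B α)) ↔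
        LeftCoprimeOn B (fun z => θ z • (1 : Mat n))) := by
  have hθd : DifferentiableOn ℂ θ 𝔻 :=
    ((differentiableOn_prod_blaschke hL).const_mul c).congr fun z _ => hθ z
  exact ⟨rightCoprimeOn_smul_one_iff hB hθd, leftCoprimeOn_smul_one_iff hB hθd⟩

open Disk in
/-- Lemma 2.2. Let `B ∈ H^∞_{M_n}` be rational and `Θ = θ I_n` with `θ`
a finite Blaschke product. The following are equivalent: (a) `B(α)` is invertible for every
zero `α` of `θ`; (b) `B` and `Θ` are right coprime; (c) `B` and `Θ` are left coprime. -/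
theorem statement5 (n : ℕ) (B : ℂ → Disk.Mat n) (hB : AnalyticOnD B)
    (hbdd : BoundedOnD B) (hrat : IsRationalMat B) (θ : ℂ → ℂ) (c : ℂ) (hc : ‖c‖ = 1)
    (L : List ℂ) (hL : ∀ a ∈ L, ‖a‖ < 1)
    (hθ : ∀ z : ℂ, θ z = c * (L.map (fun a => blaschke a z)).prod) :
    ((∀ α ∈ 𝔻, θ α = 0 → IsUnit (B α)) ↔
        RightCoprimeOn B (fun z => θ z • (1 : Mat n))) ∧
    ((∀ α ∈ 𝔻, θ α = 0 → IsUnit (B α)) ↔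
        LeftCoprimeOn B (fun z => θ z • (1 : Mat n))) :=
  statement5_general n B hB θ c L hL hθ

end BlockToeplitz
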